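/- (In classical logic.) If 𝒱 is a basic-open natural space, then 𝒱 is isomorphic to a basic-open spread whose underlying tree is the tree (ℕ*,⊑) of natural Baire space. -/

import Mathlib

/-! # Natural Topology: basic framework (Waaldijk) -/

/-- A pre-natural space: a countable set of basic dots with a decidable
pre-apartness `apart` and a decidable refinement partial order `refines`. -/
structure PreNaturalSpace (V : Type) : Type where
  countable' : Countable V
  apart : V → V → Prop
  refines : V → V → Prop
  apart_dec : DecidableRel apart
  refines_dec : DecidableRel refines
  apart_symm : ∀ a b, apart a b → apart b a
  apart_irrefl : ∀ a, ¬ apart a a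
  apart_mono : ∀ a b c, refines a b → apart c b → apart c a
  refines_refl : ∀ a, refines a a
  refines_trans : ∀ a b c, refines a b → refines b c → refines a c
  refines_antisymm : ∀ a b, refines a b → refines b a → a = b

namespace PreNaturalSpace

variable {V W : Type}

/-- `a ≺ b` : strict refinement. -/
def strict (P : PreNaturalSpace V) (a b : V) : Prop := P.refines a b ∧ a ≠ b

/-- A point is a shrinking sequence of dots deciding every apart pair of dots. -/
structure IsPoint (P : PreNaturalSpace V) (p : ℕ → V) : Prop where
  mono : ∀ n, P.refines (p (n + 1)) (p n)
  shrink : ∀ n, ∃ m, P.strict (p m) (p n)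
  decides : ∀ a b, P.apart a b → ∃ m, P.apart (p m) a ∨ P.apart (p m) b

/-- The set of points of a pre-natural space. -/
def Pt (P : PreNaturalSpace V) : Type := { p : ℕ → V // P.IsPoint p }

/-- `p` begins with the dot `a` : some `p m ≺ a`. -/
def begins (P : PreNaturalSpace V) (p : ℕ → V) (a : V) : Prop := ∃ m, P.strict (p m) a

/-- Apartness between a dot and a point. -/
def dApart (P : PreNaturalSpace V) (a : V) (p : ℕ → V) : Prop := ∃ m, P.apart (p m) a

/-- Apartness between points. -/
def pApart (P : PreNaturalSpace V) (p q : P.Pt) : Prop := ∃ n, P.apart (p.1 n) (q.1 n)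

/-- Equivalence of points: the negation of apartness. -/
def pEquiv (P : PreNaturalSpace V) (p q : P.Pt) : Prop := ¬ P.pApart p q

variable (P : PreNaturalSpace V)

lemma refines_of_le {p : ℕ → V} (hp : ∀ n, P.refines (p (n + 1)) (p n)) :
    ∀ {m k : ℕ}, m ≤ k → P.refines (p k) (p m) := by
  intro m k h
  induction h with
  | refl => exact P.refines_refl _
  | step h ih => exact P.refines_trans _ _ _ (hp _) ih

lemma begins_mono {z : ℕ → V} (hz : P.IsPoint z) {a b : V} (hab : P.refines a b)
    (h : P.begins z a) : P.begins z b := by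
  obtain ⟨j, hj1, hj2⟩ := h
  have hzb : P.refines (z j) b := P.refines_trans _ _ _ hj1 hab
  by_cases he : z j = b
  · obtain ⟨i, hi1, hi2⟩ := hz.shrink j
    exact ⟨i, P.refines_trans _ _ _ hi1 hzb, fun h' => hi2 (h'.trans he.symm)⟩
  · exact ⟨j, hzb, he⟩

/-- The natural (apartness) topology as a predicate on subsets of the point set. -/
def NatOpen (U : Set P.Pt) : Prop :=
  ∀ x ∈ U, ∀ y : P.Pt, P.pApart y x ∨ ∃ m, { z : P.Pt | P.begins z.1 (y.1 m) } ⊆ U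

instance instTopPt : TopologicalSpace P.Pt where
  IsOpen := P.NatOpen
  isOpen_univ := fun _ _ _ => Or.inr ⟨0, fun _ _ => trivial⟩
  isOpen_inter := by
    intro U U' hU hU' x hx y
    rcases hU x hx.1 y with h | ⟨m, hm⟩
    · exact Or.inl h
    rcases hU' x hx.2 y with h | ⟨k, hk⟩
    · exact Or.inl h
    refine Or.inr ⟨max m k, fun z hz => ⟨hm ?_, hk ?_⟩⟩
    · exact P.begins_mono z.2 (P.refines_of_le y.2.mono (le_max_left m k)) hz
    · exact P.begins_mono z.2 (P.refines_of_le y.2.mono (le_max_right m k)) hz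
  isOpen_sUnion := by
    intro S hS x hx y
    obtain ⟨U, hU, hxU⟩ := hx
    rcases hS U hU x hxU y with h | ⟨m, hm⟩
    · exact Or.inl h
    · exact Or.inr ⟨m, fun z hz => ⟨U, hU, hm hz⟩⟩

lemma pEquiv_refl (p : P.Pt) : P.pEquiv p p := fun ⟨_, h⟩ => P.apart_irrefl _ h

lemma pEquiv_symm {p q : P.Pt} (h : P.pEquiv p q) : P.pEquiv q p :=
  fun ⟨n, hn⟩ => h ⟨n, P.apart_symm _ _ hn⟩

lemma pEquiv_trans {p q r : P.Pt} (hpq : P.pEquiv p q) (hqr : P.pEquiv q r) :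
    P.pEquiv p r := by
  rintro ⟨n, hn⟩
  obtain ⟨m, hm⟩ := q.2.decides (p.1 n) (r.1 n) hn
  rcases hm with hm | hm
  · -- q.1 m apart from p.1 n
    refine hpq ⟨max m n, ?_⟩
    have h1 : P.apart (p.1 n) (q.1 (max m n)) :=
      P.apart_mono _ _ _ (P.refines_of_le q.2.mono (le_max_left m n)) (P.apart_symm _ _ hm)
    have h2 : P.apart (q.1 (max m n)) (p.1 (max m n)) :=
      P.apart_mono _ _ _ (P.refines_of_le p.2.mono (le_max_right m n)) (P.apart_symm _ _ h1)
    exact P.apart_symm _ _ h2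
  · refine hqr ⟨max m n, ?_⟩
    have h1 : P.apart (r.1 n) (q.1 (max m n)) :=
      P.apart_mono _ _ _ (P.refines_of_le q.2.mono (le_max_left m n)) (P.apart_symm _ _ hm)
    exact P.apart_mono _ _ _ (P.refines_of_le r.2.mono (le_max_right m n))
      (P.apart_symm _ _ h1)

/-- The setoid of points modulo `≡`. -/
def ptSetoid : Setoid P.Pt :=
  ⟨P.pEquiv, ⟨P.pEquiv_refl, P.pEquiv_symm, P.pEquiv_trans⟩⟩

/-- `â` : the set of points beginning with the dot `a`. -/
def hatSet (a : V) : Set P.Pt := { p | P.begins p.1 a }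

/-- `ā` : the `≡`-closure of `â`. -/
def barSet (a : V) : Set P.Pt := { p | ∃ q : P.Pt, P.begins q.1 a ∧ P.pEquiv p q }

/-- A natural space is basic-open when every `ā` is open. -/
def BasicOpen : Prop := ∀ a : V, IsOpen (P.barSet a)

/-- Existence of a maximal dot. -/
def HasMaxDot : Prop := ∃ m, ∀ a, P.refines a m

/-- Every basic dot begins at least one point. -/
def AllDotsInhabited : Prop := ∀ a : V, ∃ p : ℕ → V, P.IsPoint p ∧ P.begins p a

/-- The conditions making the point set of a pre-natural space a natural space. -/
def IsNaturalSpace : Prop := P.HasMaxDot ∧ P.AllDotsInhabited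

end PreNaturalSpace

/-- A refinement morphism between (pre-)natural spaces: a map on dots sending
points to points and reflecting apartness of points. -/
structure RefMorphism {V W : Type} (P : PreNaturalSpace V) (Q : PreNaturalSpace W) : Type where
  toFun : V → W
  maps_points : ∀ p : ℕ → V, P.IsPoint p → Q.IsPoint (fun n => toFun (p n))
  reflects_apart : ∀ p q : ℕ → V, P.IsPoint p → P.IsPoint q →
    (∃ n, Q.apart (toFun (p n)) (toFun (q n))) → ∃ n, P.apart (p n) (q n)

/-- The induced map on points of a refinement morphism. -/
def RefMorphism.pointMap {V W : Type} {P : PreNaturalSpace V} {Q : PreNaturalSpace W}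
    (f : RefMorphism P Q) (p : P.Pt) : Q.Pt :=
  ⟨fun n => f.toFun (p.1 n), f.maps_points p.1 p.2⟩

namespace PreNaturalSpace

variable {V W : Type} (P : PreNaturalSpace V)

/-- Restriction of a pre-natural space to a subset of dots. -/
noncomputable def restrict (S : Set V) : PreNaturalSpace S where
  countable' := by haveI := P.countable'; exact inferInstance
  apart a b := P.apart a.1 b.1
  refines a b := P.refines a.1 b.1
  apart_dec := Classical.decRel _
  refines_dec := Classical.decRel _
  apart_symm _ _ h := P.apart_symm _ _ h
  apart_irrefl a := P.apart_irrefl a.1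
  apart_mono _ _ _ h1 h2 := P.apart_mono _ _ _ h1 h2
  refines_refl a := P.refines_refl a.1
  refines_trans _ _ _ h1 h2 := P.refines_trans _ _ _ h1 h2
  refines_antisymm _ _ h1 h2 := Subtype.ext (P.refines_antisymm _ _ h1 h2)

/-! ## Trail spaces -/

/-- A `≺`-trail: a finite strictly refining sequence `a₀ ≻ a₁ ≻ …`. -/
def Trail : Type := { l : List V // l.Chain' fun a b => P.strict b a }

lemma strict_trans_flip : Transitive (fun a b : V => P.strict b a) := by
  rintro a b c ⟨h1, h1'⟩ ⟨h2, h2'⟩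
  refine ⟨P.refines_trans _ _ _ h2 h1, fun he => ?_⟩
  exact h2' (P.refines_antisymm _ _ h2 (he ▸ h1))

lemma last_refines_of_prefix {a b : List V}
    (ha : a.Chain' fun x y => P.strict y x) (hpre : b <+: a)
    {x y : V} (hx : x ∈ a.getLast?) (hy : y ∈ b.getLast?) :
    P.refines x y := by
  haveI : IsTrans V (fun x y : V => P.strict y x) := ⟨fun _ _ _ h1 h2 => P.strict_trans_flip h1 h2⟩
  have hpw : a.Pairwise fun x y => P.strict y x := List.isChain_iff_pairwise.mp ha
  obtain ⟨t, rfl⟩ := hpre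
  rcases eq_or_ne t [] with rfl | ht
  · rw [List.append_nil] at hx
    have : x = y := by
      rw [Option.mem_def] at hx hy
      exact Option.some_injective _ (hx ▸ hy ▸ rfl)
    exact this ▸ P.refines_refl x
  · rw [List.getLast?_append_of_ne_nil _ ht] at hx
    have hxt : x ∈ t := List.mem_of_mem_getLast? hx
    have hyb : y ∈ b := List.mem_of_mem_getLast? hy
    have := (List.pairwise_append.mp hpw).2.2 y hyb x hxt
    exact this.1

/-- The trail space of a pre-natural space: dots are `≺`-trails, with
`a ⊑* b` iff `b` is an initial segment of `a`, and `a #* b` iff the last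
dots of `a` and `b` are apart. -/
noncomputable def trailSpace : PreNaturalSpace P.Trail where
  countable' := by haveI := P.countable'; exact inferInstanceAs (Countable
    { l : List V // l.Chain' fun a b => P.strict b a })
  apart a b := ∃ x ∈ a.1.getLast?, ∃ y ∈ b.1.getLast?, P.apart x y
  refines a b := b.1 <+: a.1
  apart_dec := Classical.decRel _
  refines_dec := Classical.decRel _
  apart_symm := by
    rintro a b ⟨x, hx, y, hy, hxy⟩
    exact ⟨y, hy, x, hx, P.apart_symm _ _ hxy⟩
  apart_irrefl := by
    rintro a ⟨x, hx, y, hy, hxy⟩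
    rw [Option.mem_def] at hx hy
    have : x = y := Option.some_injective _ (hx ▸ hy ▸ rfl)
    exact P.apart_irrefl x (this ▸ hxy)
  apart_mono := by
    rintro a b c hab ⟨x, hx, y, hy, hxy⟩
    have hbne : b.1 ≠ [] := by
      intro h
      rw [h] at hy
      simp at hy
    have hane : a.1 ≠ [] := by
      intro h
      exact hbne (List.prefix_nil.mp (h ▸ hab))
    obtain ⟨z, hz⟩ : ∃ z, z ∈ a.1.getLast? := by
      rcases h : a.1.getLast? with _ | z
      · exact absurd (List.getLast?_eq_none_iff.mp h) hane
      · exact ⟨z, rfl⟩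
    have hzy : P.refines z y := P.last_refines_of_prefix a.2 hab hz hy
    exact ⟨x, hx, z, hz, P.apart_mono _ _ _ hzy hxy⟩
  refines_refl a := List.prefix_refl a.1
  refines_trans _ _ _ h1 h2 := h2.trans h1
  refines_antisymm a b h1 h2 :=
    Subtype.ext (h2.eq_of_length (le_antisymm h2.length_le h1.length_le))

end PreNaturalSpace

open Classical in
/-- `p♯(n)` : the `≺`-trail obtained from `p₀, …, p_{n-1}` by deleting repetitions
(for a shrinking sequence `p`, repetitions are consecutive). -/
noncomputable def segList {V : Type} (p : ℕ → V) : ℕ → List V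
  | 0 => []
  | n + 1 =>
    if (segList p n).getLast? = some (p n) then segList p n
    else segList p n ++ [p n]

namespace PreNaturalSpace

variable {V W : Type} (P : PreNaturalSpace V)

/-- The map on trail dots sending a nonempty trail to its last element and
the empty trail to `m`. -/
def lastDot (m : V) (q : P.Trail) : V := q.1.getLast?.getD m

/-- `g` is the point map induced by a trail morphism `f` (a refinement morphism
on the trail space): `g p = f (p♯(0)), f (p♯(1)), …`. -/
def InducedByTrailMorphism (Q : PreNaturalSpace W) (f : RefMorphism P.trailSpace Q)
    (g : P.Pt → Q.Pt) : Prop :=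
  ∀ p : P.Pt, ∃ t : P.trailSpace.Pt, (∀ n, (t.1 n).1 = segList p.1 n) ∧ g p = f.pointMap t

/-- `g` is a natural morphism map: induced by a refinement morphism or by a trail morphism. -/
def IsNaturalMorphismMap (Q : PreNaturalSpace W) (g : P.Pt → Q.Pt) : Prop :=
  (∃ f : RefMorphism P Q, ∀ p, g p = f.pointMap p) ∨
  (∃ f : RefMorphism P.trailSpace Q, P.InducedByTrailMorphism Q f g)

/-- Two natural spaces are isomorphic: natural morphisms both ways, inverse up to `≡`. -/
def AreIsomorphic (Q : PreNaturalSpace W) : Prop :=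
  ∃ (f : P.Pt → Q.Pt) (g : Q.Pt → P.Pt),
    P.IsNaturalMorphismMap Q f ∧ Q.IsNaturalMorphismMap P g ∧
    (∀ x, P.pEquiv (g (f x)) x) ∧ (∀ y, Q.pEquiv (f (g y)) y)

/-- A natural space is a basic neighborhood space iff it is isomorphic to a basic-open space. -/
def IsBasicNbhdSpace : Prop :=
  ∃ (W' : Type) (Q : PreNaturalSpace W'), Q.IsNaturalSpace ∧ Q.BasicOpen ∧ P.AreIsomorphic Q

/-! ## Trees, treas, spreads, spraids, fans -/

/-- `a` is a successor of `c`. -/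
def IsSucc (a c : V) : Prop := P.strict a c ∧ ∀ b, P.strict a b → P.refines b c → b = c

/-- A successor-trail (as a list, each entry a successor of the previous one). -/
def SuccChain (l : List V) : Prop := l.Chain' fun x y => P.IsSucc y x

/-- A successor-trail from `m` to `a`. -/
def IsSuccTrailFromTo (m a : V) (l : List V) : Prop :=
  P.SuccChain l ∧ l.head? = some m ∧ l.getLast? = some a

/-- `(V,⊑)` is a tree. -/
def IsTree : Prop :=
  ∃ m, (∀ a, P.refines a m) ∧ ∀ a, ∃! l : List V, P.IsSuccTrailFromTo m a l

/-- `(V,⊑)` is a trea. -/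
def IsTrea : Prop :=
  ∃ m, (∀ a, P.refines a m) ∧ (∀ a, { b | P.refines a b }.Finite) ∧
    ∀ a, ∃ g : ℕ, ∀ l : List V, P.IsSuccTrailFromTo m a l → l.length = g

/-- Every infinite successor-trail is a point. -/
def SuccTrailsArePoints : Prop :=
  ∀ q : ℕ → V, (∀ n, P.IsSucc (q (n + 1)) (q n)) → P.IsPoint q

def IsSpread : Prop := P.IsTree ∧ P.SuccTrailsArePoints

def IsSpraid : Prop := P.IsTrea ∧ P.SuccTrailsArePoints

/-- Finitely branching: every dot has finitely many successors. -/
def FinBranching : Prop := ∀ a : V, { b | P.IsSucc b a }.Finite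

def IsFan : Prop := P.IsSpread ∧ P.FinBranching

def IsFann : Prop := P.IsSpraid ∧ P.FinBranching

end PreNaturalSpace
/-! ## Natural Baire space and natural Cantor space -/

/-- Natural Baire space: dots are finite sequences of naturals, `b ⊑ a` iff
`a` is an initial segment of `b`, apart iff incomparable. -/
noncomputable def BairePre : PreNaturalSpace (List ℕ) where
  countable' := inferInstance
  apart a b := ¬ a <+: b ∧ ¬ b <+: a
  refines a b := b <+: a
  apart_dec := Classical.decRel _
  refines_dec := Classical.decRel _
  apart_symm _ _ h := ⟨h.2, h.1⟩
  apart_irrefl a h := h.1 (List.prefix_refl a)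
  apart_mono := by
    intro a b c hab hcb
    constructor
    · intro hca
      rcases List.prefix_or_prefix_of_prefix hca hab with h | h
      · exact hcb.1 h
      · exact hcb.2 h
    · intro hac
      exact hcb.2 (hab.trans hac)
  refines_refl a := List.prefix_refl a
  refines_trans _ _ _ h1 h2 := h2.trans h1
  refines_antisymm _ _ h1 h2 := h2.eq_of_length (le_antisymm h2.length_le h1.length_le)

/-- Natural Cantor space: the restriction of natural Baire space to finite 0-1 sequences. -/
noncomputable def CantorPre : PreNaturalSpace ({ l : List ℕ | ∀ x ∈ l, x ≤ 1 }) :=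
  BairePre.restrict { l : List ℕ | ∀ x ∈ l, x ≤ 1 }

/-- The sequence of initial segments of `α ∈ ℕ^ℕ`. -/
def initSegs (α : ℕ → ℕ) (n : ℕ) : List ℕ := (List.range n).map α


/-!
Enumerate the dots `e₀, e₁, …` and the pairs of dots. A sequence of naturals `m₀ … m_{n-1}` is
read as a sequence of moves "go to `e_{mₖ}`", where the move at depth `k` must strictly refine
the current dot and decide the `k`-th pair (an illegal move is replaced by a fixed legal one,
which exists because every dot begins a point). Declaring two sequences apart when the coded
dots are gives a spread on `(ℕ*, ⊑)` whose growing branches code points of the original space,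
so decoding is a refinement morphism. Conversely a trail is encoded by appending the code of its
last dot whenever that move is legal; along a point this happens infinitely often, so encoding is
a trail morphism, and every term of either composite is refined by a term of the original point.
Basic-openness transfers because a point beginning with the dot coded by `s` can be tracked by a
branch through `s`.
-/

open Filter

lemma exists_lt_of_forall_exists_lt {f : ℕ → ℕ} (h : ∀ n, ∃ m, f n < f m) (k : ℕ) :
    ∃ n, k < f n := by
  induction k with
  | zero => obtain ⟨m, hm⟩ := h 0; exact ⟨m, by omega⟩
  | succ k ih => obtain ⟨n, hn⟩ := ih; obtain ⟨m, hm⟩ := h n; exact ⟨m, by omega⟩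

lemma prefix_and_ne_of_length_lt {α : Type*} {t : ℕ → List α}
    (hmono : ∀ n, t n <+: t (n + 1)) {n m : ℕ} (h : (t n).length < (t m).length) :
    t n <+: t m ∧ t n ≠ t m := by
  have hchain := Nat.rel_of_forall_rel_succ_of_le (· <+: ·) hmono
  have hle : n ≤ m := Nat.le_of_not_lt fun hmn => absurd (hchain hmn.le).length_le (by omega)
  exact ⟨hchain hle, fun he => by rw [he] at h; omega⟩

section SegList

variable {V : Type} (p : ℕ → V)

lemma getLast?_segList_succ (n : ℕ) : (segList p (n + 1)).getLast? = some (p n) := by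
  rw [segList]
  split_ifs with h
  · exact h
  · exact List.getLast?_concat

lemma segList_prefix_succ (n : ℕ) : segList p n <+: segList p (n + 1) := by
  rw [segList]
  split_ifs
  · exact List.prefix_refl _
  · exact List.prefix_append _ _

lemma exists_eq_of_mem_segList {v : V} {n : ℕ} (hv : v ∈ segList p n) : ∃ j, v = p j := by
  induction n with
  | zero => simp [segList] at hv
  | succ n ih =>
    rw [segList] at hv
    split_ifs at hv
    · exact ih hv
    · rcases List.mem_append.mp hv with hv | hv
      · exact ih hv
      · exact ⟨n, List.mem_singleton.mp hv⟩

end SegList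

namespace PreNaturalSpace

variable {V : Type} {P : PreNaturalSpace V}

lemma strict_of_strict_of_refines {a b c : V} (hab : P.strict a b) (hbc : P.refines b c) :
    P.strict a c :=
  ⟨P.refines_trans _ _ _ hab.1 hbc,
    fun hac => hab.2 (P.refines_antisymm _ _ hab.1 (hac ▸ hbc))⟩

lemma strict_of_refines_of_strict {a b c : V} (hab : P.refines a b) (hbc : P.strict b c) :
    P.strict a c :=
  ⟨P.refines_trans _ _ _ hab hbc.1,
    fun hac => hbc.2 (P.refines_antisymm _ _ hbc.1 (hac ▸ hab))⟩

lemma apart_of_refines_left {a a' b : V} (h : P.refines a' a) (hab : P.apart a b) :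
    P.apart a' b :=
  P.apart_symm _ _ (P.apart_mono _ _ _ h (P.apart_symm _ _ hab))

lemma not_apart_of_refines {a b c : V} (hca : P.refines c a) (hcb : P.refines c b) :
    ¬ P.apart a b := fun hab =>
  P.apart_irrefl c (apart_of_refines_left hca (P.apart_mono _ _ _ hcb hab))

namespace IsPoint

variable {p : ℕ → V}

lemma lt_of_strict (hp : P.IsPoint p) {m n : ℕ} (h : P.strict (p m) (p n)) : n < m :=
  Nat.lt_of_not_le fun hmn => h.2 (P.refines_antisymm _ _ h.1 (P.refines_of_le hp.mono hmn))

lemma eventually_strict (hp : P.IsPoint p) {c : V} {i : ℕ} (hi : P.refines (p i) c) :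
    ∀ᶠ m in atTop, P.strict (p m) c := by
  obtain ⟨j, hj⟩ := hp.shrink i
  exact eventually_atTop.2 ⟨j, fun m hm =>
    strict_of_refines_of_strict (P.refines_of_le hp.mono hm) (strict_of_strict_of_refines hj hi)⟩

lemma eventually_apart (hp : P.IsPoint p) {a b : V} (hab : P.apart a b) :
    ∀ᶠ m in atTop, P.apart (p m) a ∨ P.apart (p m) b := by
  obtain ⟨i, hi⟩ := hp.decides a b hab
  exact eventually_atTop.2 ⟨i, fun m hm =>
    hi.imp (apart_of_refines_left (P.refines_of_le hp.mono hm))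
      (apart_of_refines_left (P.refines_of_le hp.mono hm))⟩

lemma not_apart_of_forall_exists_refines (hp : P.IsPoint p) {q : ℕ → V}
    (h : ∀ n, ∃ j, P.refines (p j) (q n)) : ¬ ∃ n, P.apart (q n) (p n) := by
  rintro ⟨n, hn⟩
  obtain ⟨j, hj⟩ := h n
  exact not_apart_of_refines
    (P.refines_trans _ _ _ (P.refines_of_le hp.mono (le_max_left j n)) hj)
    (P.refines_of_le hp.mono (le_max_right j n)) hn

end IsPoint

section Trail

lemma strict_of_isChain_append {w r : List V} (h : (w ++ r).IsChain fun a b => P.strict b a)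
    {x y : V} (hx : x ∈ w) (hy : y ∈ r) : P.strict y x :=
  have : IsTrans V fun a b => P.strict b a := ⟨fun _ _ _ h1 h2 => P.strict_trans_flip h1 h2⟩
  (List.pairwise_append.mp (List.isChain_iff_pairwise.mp h)).2.2 x hx y hy

variable {M : V}

lemma lastDot_eq_of_eq_concat {u : P.Trail} {w : List V} {d : V} (h : u.1 = w ++ [d]) :
    P.lastDot M u = d := by
  simp [lastDot, h]

lemma exists_eq_concat_lastDot {u : P.Trail} (hu : u.1 ≠ []) :
    ∃ w, u.1 = w ++ [P.lastDot M u] := by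
  obtain ⟨w, d, hwd⟩ := List.eq_nil_or_concat' u.1 |>.resolve_left hu
  exact ⟨w, by rw [lastDot_eq_of_eq_concat hwd, hwd]⟩

lemma lastDot_refines_of_mem {u : P.Trail} {x : V} (hx : x ∈ u.1) :
    P.refines (P.lastDot M u) x := by
  obtain ⟨w, hw⟩ := exists_eq_concat_lastDot (M := M) (List.ne_nil_of_mem hx)
  rw [hw, List.mem_append, List.mem_singleton] at hx
  rcases hx with hx | rfl
  · exact (strict_of_isChain_append (hw ▸ u.2) hx List.mem_cons_self).1
  · exact P.refines_refl _

lemma lastDot_strict_of_prefix {u v : P.Trail} (hv : v.1 ≠ []) (h : v.1 <+: u.1) (hne : v ≠ u) :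
    P.strict (P.lastDot M u) (P.lastDot M v) := by
  obtain ⟨r, hr⟩ := h
  obtain ⟨r', d, rfl⟩ := List.eq_nil_or_concat' r |>.resolve_left
    fun h => hne (Subtype.ext (by simpa [h] using hr))
  have hu : u.1 = (v.1 ++ r') ++ [d] := by simp [← hr]
  rw [lastDot_eq_of_eq_concat hu]
  obtain ⟨w, hw⟩ := exists_eq_concat_lastDot (M := M) hv
  exact strict_of_isChain_append (hu ▸ u.2) (List.mem_append_left _ (hw ▸ List.mem_concat_self))
    List.mem_cons_self

variable (hM : ∀ a, P.refines a M)
include hM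

lemma lastDot_refines_of_prefix {u v : P.Trail} (h : v.1 <+: u.1) :
    P.refines (P.lastDot M u) (P.lastDot M v) := by
  rcases eq_or_ne v.1 [] with hv | hv
  · simpa [lastDot, hv] using hM (P.lastDot M u)
  · obtain ⟨w, hw⟩ := exists_eq_concat_lastDot (M := M) hv
    exact lastDot_refines_of_mem (h.subset (hw ▸ List.mem_concat_self))

/-- The empty trail behaves like the maximal dot, which is apart from nothing. -/
lemma trailSpace_apart_iff {u v : P.Trail} :
    P.trailSpace.apart u v ↔ P.apart (P.lastDot M u) (P.lastDot M v) := by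
  have top_not_apart : ∀ a, ¬ P.apart M a ∧ ¬ P.apart a M := fun a =>
    ⟨not_apart_of_refines (hM a) (P.refines_refl a),
      not_apart_of_refines (P.refines_refl a) (hM a)⟩
  constructor
  · rintro ⟨x, hx, y, hy, hxy⟩
    simpa [lastDot, Option.mem_def.mp hx, Option.mem_def.mp hy] using hxy
  · intro h
    rcases hu : u.1.getLast? with _ | x <;> rcases hv : v.1.getLast? with _ | y <;>
      simp only [lastDot, hu, hv, Option.getD_none, Option.getD_some] at h
    · exact absurd h (top_not_apart M).1
    · exact absurd h (top_not_apart y).1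
    · exact absurd h (top_not_apart x).2
    · exact ⟨x, hu, y, hv, h⟩

lemma IsPoint.lastDot {T : ℕ → P.Trail} (hT : P.trailSpace.IsPoint T) :
    P.IsPoint fun n => P.lastDot M (T n) where
  mono n := lastDot_refines_of_prefix hM (hT.mono n)
  shrink n := by
    obtain ⟨n₁, hn₁⟩ := hT.shrink n
    obtain ⟨n₂, hn₂⟩ := hT.shrink n₁
    have hne : (T n₁).1 ≠ [] := fun h => by
      have h' : (T n).1 <+: [] := h ▸ hn₁.1
      exact hn₁.2 (Subtype.ext (h.trans (List.prefix_nil.mp h').symm))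
    exact ⟨n₂, strict_of_strict_of_refines
      (lastDot_strict_of_prefix hne hn₂.1 (Ne.symm hn₂.2)) (lastDot_refines_of_prefix hM hn₁.1)⟩
  decides a b hab := by
    obtain ⟨m, hm⟩ := hT.decides ⟨[a], List.isChain_singleton a⟩
      ⟨[b], List.isChain_singleton b⟩ ((trailSpace_apart_iff hM).2 hab)
    exact ⟨m, hm.imp (trailSpace_apart_iff hM).1 (trailSpace_apart_iff hM).1⟩

end Trail

lemma isChain_segList {p : ℕ → V} (hp : ∀ n, P.refines (p (n + 1)) (p n)) (n : ℕ) :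
    (segList p n).IsChain fun a b => P.strict b a := by
  induction n with
  | zero => exact List.isChain_nil
  | succ n ih =>
    rw [segList]
    split_ifs with hlast
    · exact ih
    refine List.isChain_append.mpr ⟨ih, List.isChain_singleton _, fun x hx y hy => ?_⟩
    obtain rfl : y = p n := by simpa using hy.symm
    cases n with
    | zero => simp [segList] at hx
    | succ m =>
      obtain rfl : x = p m := by simpa [getLast?_segList_succ] using hx.symm
      exact ⟨hp m, fun h => hlast (by rw [getLast?_segList_succ, h])⟩

lemma isPoint_segList {p : ℕ → V} (hp : P.IsPoint p) :
    P.trailSpace.IsPoint fun n => (⟨segList p n, isChain_segList hp.mono n⟩ : P.Trail) where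
  mono := segList_prefix_succ p
  shrink n := by
    obtain ⟨m, hm⟩ := hp.shrink n
    have hnm := hp.lt_of_strict hm
    refine ⟨m + 1, Nat.rel_of_forall_rel_succ_of_le (· <+: ·) (segList_prefix_succ p)
      (by omega), fun he => ?_⟩
    have hlast := getLast?_segList_succ p m
    rw [show segList p (m + 1) = segList p n from congrArg Subtype.val he] at hlast
    cases n with
    | zero => simp [segList] at hlast
    | succ j =>
      rw [getLast?_segList_succ, Option.some_inj] at hlast
      exact (strict_of_strict_of_refines hm (hp.mono j)).2 hlast.symm
  decides := by
    rintro u v ⟨x, hx, y, hy, hxy⟩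
    obtain ⟨i, hi⟩ := hp.decides x y hxy
    exact ⟨i + 1, hi.imp (fun h => ⟨p i, getLast?_segList_succ p i, x, hx, h⟩)
      (fun h => ⟨p i, getLast?_segList_succ p i, y, hy, h⟩)⟩

variable (P) in
noncomputable def trailOf (p : P.Pt) : P.trailSpace.Pt := ⟨_, isPoint_segList p.2⟩

lemma lastDot_trailOf_succ {M : V} (p : P.Pt) (n : ℕ) :
    P.lastDot M ((P.trailOf p).1 (n + 1)) = p.1 n := by
  simp [lastDot, trailOf, getLast?_segList_succ]

section BaireTree

variable {Q : PreNaturalSpace (List ℕ)} (hQ : Q.refines = BairePre.refines)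
include hQ

lemma isSucc_iff_of_refines_eq_baire {b c : List ℕ} : Q.IsSucc b c ↔ ∃ x, b = c ++ [x] := by
  have hr : ∀ a b, Q.refines a b ↔ b <+: a := fun a b => by rw [hQ]; rfl
  simp only [IsSucc, strict, hr]
  constructor
  · rintro ⟨⟨⟨r, rfl⟩, hne⟩, hmin⟩
    obtain _ | ⟨x, r⟩ := r
    · simp at hne
    refine ⟨x, by_contra fun hb => ?_⟩
    have := hmin (c ++ [x]) ⟨⟨r, by simp⟩, hb⟩ (List.prefix_append _ _)
    simp at this
  · rintro ⟨x, rfl⟩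
    refine ⟨⟨List.prefix_append _ _, by simp⟩, fun d ⟨hd, hne⟩ hcd => ?_⟩
    rcases List.prefix_concat_iff.mp hd with h | h
    · exact absurd h.symm hne
    · exact List.IsPrefix.eq_of_length h (le_antisymm h.length_le hcd.length_le)

lemma eq_inits_of_isSuccTrailFromTo {l : List (List ℕ)} {a : List ℕ}
    (hl : Q.IsSuccTrailFromTo [] a l) : l = a.inits := by
  induction l using List.reverseRecOn generalizing a with
  | nil => simp [IsSuccTrailFromTo] at hl
  | append_singleton l b ih =>
    obtain ⟨hchain, hhead, hlast⟩ := hl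
    obtain rfl : b = a := by simpa using hlast
    rcases List.eq_nil_or_concat' l with rfl | ⟨l', c, rfl⟩
    · obtain rfl : b = [] := by simpa using hhead
      rfl
    have hsplit := List.isChain_append.mp hchain
    have hsucc : Q.IsSucc b c := hsplit.2.2 c (by simp) b (by simp)
    obtain ⟨x, rfl⟩ := (isSucc_iff_of_refines_eq_baire hQ).mp hsucc
    rw [ih (a := c) ⟨hsplit.1, by simpa using hhead, by simp⟩, List.inits_append]
    simp

lemma isSuccTrailFromTo_inits (a : List ℕ) : Q.IsSuccTrailFromTo [] a a.inits := by
  induction a using List.reverseRecOn with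
  | nil => exact ⟨List.isChain_singleton _, rfl, rfl⟩
  | append_singleton c x ih =>
    obtain ⟨hchain, hhead, hlast⟩ := ih
    have hinits : (c ++ [x]).inits = c.inits ++ [c ++ [x]] := by simp [List.inits_append]
    refine ⟨?_, by cases c <;> rfl, by rw [hinits, List.getLast?_concat]⟩
    rw [SuccChain, hinits]
    refine List.isChain_append.mpr ⟨hchain, List.isChain_singleton _, fun y hy z hz => ?_⟩
    have hy : y = c := by simpa [hlast] using hy.symm
    have hz : z = c ++ [x] := by simpa using hz.symm
    rw [hy, hz]
    exact (isSucc_iff_of_refines_eq_baire hQ).mpr ⟨x, rfl⟩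

lemma isTree_of_refines_eq_baire : Q.IsTree :=
  ⟨[], fun a => by rw [hQ]; exact List.nil_prefix, fun a => ⟨a.inits,
    isSuccTrailFromTo_inits hQ a, fun _ hl => eq_inits_of_isSuccTrailFromTo hQ hl⟩⟩

end BaireTree

structure BaireCoding (P : PreNaturalSpace V) : Type where
  top : V
  refines_top : ∀ a, P.refines a top
  exists_point_begins : P.AllDotsInhabited
  enum : ℕ → V
  enum_surjective : Function.Surjective enum
  pairs : ℕ → V × V
  pairs_surjective : Function.Surjective pairs

lemma BaireCoding.nonempty (hP : P.IsNaturalSpace) : Nonempty (BaireCoding P) := by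
  obtain ⟨⟨M, hM⟩, hinh⟩ := hP
  have := P.countable'
  have : Nonempty V := ⟨M⟩
  obtain ⟨e, he⟩ := exists_surjective_nat V
  obtain ⟨pe, hpe⟩ := exists_surjective_nat (V × V)
  exact ⟨⟨M, hM, hinh, e, he, pe, hpe⟩⟩

namespace BaireCoding

variable (C : BaireCoding P)

def Decides (d : V) (n : ℕ) : Prop :=
  P.apart (C.pairs n).1 (C.pairs n).2 → P.apart d (C.pairs n).1 ∨ P.apart d (C.pairs n).2

/-- The dots allowed as the successor of `c` at depth `n` of the spread. -/
def Admissible (c : V) (n : ℕ) (d : V) : Prop := P.strict d c ∧ C.Decides d n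

variable {C} in
lemma Decides.of_refines {d d' : V} {n : ℕ} (h : C.Decides d n) (hd : P.refines d' d) :
    C.Decides d' n := fun hab =>
  (h hab).imp (apart_of_refines_left hd) (apart_of_refines_left hd)

lemma eventually_decides {p : ℕ → V} (hp : P.IsPoint p) (n : ℕ) :
    ∀ᶠ m in atTop, C.Decides (p m) n := by
  by_cases hab : P.apart (C.pairs n).1 (C.pairs n).2
  · exact (hp.eventually_apart hab).mono fun _ h _ => h
  · exact Eventually.of_forall fun _ h => absurd h hab

lemma exists_admissible (c : V) (n : ℕ) : ∃ d, C.Admissible c n d := by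
  obtain ⟨p, hp, j, hj⟩ := C.exists_point_begins c
  obtain ⟨m, hm⟩ := ((hp.eventually_strict hj.1).and (C.eventually_decides hp n)).exists
  exact ⟨p m, hm⟩

/-- An illegal move is replaced by a fixed admissible dot, so that every finite sequence of
moves codes a dot. -/
noncomputable def step (c : V) (n m : ℕ) : V :=
  open Classical in
  if C.Admissible c n (C.enum m) then C.enum m else (C.exists_admissible c n).choose

lemma admissible_step (c : V) (n m : ℕ) : C.Admissible c n (C.step c n m) := by
  unfold step
  split_ifs with h
  · exact h
  · exact (C.exists_admissible c n).choose_spec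

noncomputable def code (a : V) : ℕ := Function.surjInv C.enum_surjective a

lemma step_code {c a : V} {n : ℕ} (h : C.Admissible c n a) : C.step c n (C.code a) = a := by
  rw [step, code, Function.surjInv_eq C.enum_surjective, if_pos h]

noncomputable def dotOf (s : List ℕ) : V :=
  if h : s = [] then C.top else C.step (dotOf s.dropLast) (s.length - 1) (s.getLast h)
termination_by s.length
decreasing_by
  have := List.length_pos_iff.mpr h
  simp only [List.length_dropLast]
  omega

lemma dotOf_nil : C.dotOf [] = C.top := by
  rw [dotOf, dif_pos rfl]

lemma dotOf_concat (s : List ℕ) (m : ℕ) :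
    C.dotOf (s ++ [m]) = C.step (C.dotOf s) s.length m := by
  rw [dotOf, dif_neg (by simp)]
  simp

lemma admissible_dotOf_concat (s : List ℕ) (m : ℕ) :
    C.Admissible (C.dotOf s) s.length (C.dotOf (s ++ [m])) := by
  rw [dotOf_concat]
  exact C.admissible_step _ _ _

lemma dotOf_refines_of_prefix {s t : List ℕ} (h : s <+: t) :
    P.refines (C.dotOf t) (C.dotOf s) := by
  obtain ⟨r, rfl⟩ := h
  induction r using List.reverseRecOn with
  | nil => simpa using P.refines_refl _
  | append_singleton r m ih =>
    rw [← List.append_assoc]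
    exact P.refines_trans _ _ _ (C.admissible_dotOf_concat _ m).1.1 ih

lemma dotOf_strict_of_prefix {s t : List ℕ} (h : s <+: t) (hne : s ≠ t) :
    P.strict (C.dotOf t) (C.dotOf s) := by
  obtain ⟨r, rfl⟩ := h
  obtain ⟨r, m, rfl⟩ := List.eq_nil_or_concat' r |>.resolve_left fun h => hne (by simp [h])
  rw [← List.append_assoc]
  exact strict_of_strict_of_refines (C.admissible_dotOf_concat _ m).1
    (C.dotOf_refines_of_prefix (List.prefix_append _ _))

lemma decides_dotOf {s : List ℕ} {n : ℕ} (h : n < s.length) : C.Decides (C.dotOf s) n := by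
  obtain ⟨u, m, hu⟩ := List.eq_nil_or_concat' (s.take (n + 1)) |>.resolve_left
    (List.ne_nil_of_length_pos (by simp; omega))
  have hlen : u.length = n := by
    have := congrArg List.length hu
    simp at this
    omega
  have hdec := (C.admissible_dotOf_concat u m).2
  rw [hlen, ← hu] at hdec
  exact hdec.of_refines (C.dotOf_refines_of_prefix (List.take_prefix _ _))


noncomputable def spread : PreNaturalSpace (List ℕ) where
  countable' := inferInstance
  apart s t := P.apart (C.dotOf s) (C.dotOf t)
  refines := BairePre.refines
  apart_dec := Classical.decRel _
  refines_dec := Classical.decRel _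
  apart_symm _ _ := P.apart_symm _ _
  apart_irrefl _ := P.apart_irrefl _
  apart_mono _ _ _ hab := P.apart_mono _ _ _ (C.dotOf_refines_of_prefix hab)
  refines_refl := BairePre.refines_refl
  refines_trans := BairePre.refines_trans
  refines_antisymm := BairePre.refines_antisymm

lemma spread_refines : C.spread.refines = BairePre.refines := rfl

/-- The `n`-th pair is decided once the branch is longer than `n`. -/
lemma isPoint_dotOf {t : ℕ → List ℕ} (hmono : ∀ n, t n <+: t (n + 1))
    (hgrow : ∀ n, ∃ m, (t n).length < (t m).length) :
    P.IsPoint fun n => C.dotOf (t n) where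
  mono n := C.dotOf_refines_of_prefix (hmono n)
  shrink n := by
    obtain ⟨m, hm⟩ := hgrow n
    have h := prefix_and_ne_of_length_lt hmono hm
    exact ⟨m, C.dotOf_strict_of_prefix h.1 h.2⟩
  decides a b hab := by
    obtain ⟨k, hk⟩ := C.pairs_surjective (a, b)
    obtain ⟨n, hn⟩ := exists_lt_of_forall_exists_lt hgrow k
    have := C.decides_dotOf hn
    rw [Decides, hk] at this
    exact ⟨n, this hab⟩

lemma isPoint_spread_iff {t : ℕ → List ℕ} :
    C.spread.IsPoint t ↔
      (∀ n, t n <+: t (n + 1)) ∧ ∀ n, ∃ m, (t n).length < (t m).length := by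
  constructor
  · intro ht
    refine ⟨ht.mono, fun n => ?_⟩
    obtain ⟨m, hm, hne⟩ := ht.shrink n
    exact ⟨m, lt_of_le_of_ne hm.length_le fun h => hne (hm.eq_of_length h).symm⟩
  · rintro ⟨hmono, hgrow⟩
    refine ⟨hmono, fun n => ?_, fun a b => (C.isPoint_dotOf hmono hgrow).decides _ _⟩
    obtain ⟨m, hm⟩ := hgrow n
    have h := prefix_and_ne_of_length_lt hmono hm
    exact ⟨m, h.1, Ne.symm h.2⟩

lemma isPoint_spread_of_succ {t : ℕ → List ℕ} (h : ∀ n, ∃ x, t (n + 1) = t n ++ [x]) :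
    C.spread.IsPoint t := by
  refine C.isPoint_spread_iff.2 ⟨fun n => ?_, fun n => ⟨n + 1, ?_⟩⟩ <;>
    obtain ⟨x, hx⟩ := h n <;> rw [hx]
  · exact List.prefix_append _ _
  · simp

lemma isSpread : C.spread.IsSpread :=
  ⟨isTree_of_refines_eq_baire C.spread_refines, fun _ hq =>
    C.isPoint_spread_of_succ fun n => (isSucc_iff_of_refines_eq_baire C.spread_refines).1 (hq n)⟩

lemma isNaturalSpace : C.spread.IsNaturalSpace :=
  ⟨⟨[], fun _ => List.nil_prefix⟩, fun s =>
    ⟨fun n => s ++ List.replicate n 0, C.isPoint_spread_of_succ fun n => ⟨0, by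
      simp [List.replicate_succ']⟩, 1, List.prefix_append _ _, by simp⟩⟩

noncomputable def decode : RefMorphism C.spread P where
  toFun := C.dotOf
  maps_points _ ht := C.isPoint_dotOf (C.isPoint_spread_iff.1 ht).1 (C.isPoint_spread_iff.1 ht).2
  reflects_apart _ _ _ _ h := h

lemma begins_decode {t : ℕ → List ℕ} {s : List ℕ} (h : C.spread.begins t s) :
    P.begins (fun n => C.dotOf (t n)) (C.dotOf s) :=
  h.imp fun _ hm => C.dotOf_strict_of_prefix hm.1 (Ne.symm hm.2)

noncomputable def extend (s : List ℕ) (a : V) : List ℕ :=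
  open Classical in
  if C.Admissible (C.dotOf s) s.length a then s ++ [C.code a] else s

noncomputable def encodeFrom (s : List ℕ) (l : List V) : List ℕ := l.foldl C.extend s

lemma dotOf_extend (s : List ℕ) (a : V) :
    C.dotOf (C.extend s a) = a ∨ C.dotOf (C.extend s a) = C.dotOf s := by
  unfold extend
  split_ifs with h
  · rw [dotOf_concat, C.step_code h]
    exact Or.inl rfl
  · exact Or.inr rfl

lemma prefix_extend (s : List ℕ) (a : V) : s <+: C.extend s a := by
  unfold extend
  split_ifs
  exacts [List.prefix_append _ _, List.prefix_refl s]

lemma prefix_encodeFrom (s : List ℕ) (l : List V) : s <+: C.encodeFrom s l := by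
  induction l generalizing s with
  | nil => exact List.prefix_refl s
  | cons a l ih => exact (C.prefix_extend s a).trans (ih (C.extend s a))

lemma encodeFrom_append (s : List ℕ) (l r : List V) :
    C.encodeFrom s (l ++ r) = C.encodeFrom (C.encodeFrom s l) r :=
  List.foldl_append

lemma encodeFrom_prefix (s : List ℕ) {l l' : List V} (h : l <+: l') :
    C.encodeFrom s l <+: C.encodeFrom s l' := by
  obtain ⟨r, rfl⟩ := h
  rw [encodeFrom_append]
  exact C.prefix_encodeFrom _ r

lemma dotOf_encodeFrom (s : List ℕ) (l : List V) :
    C.dotOf (C.encodeFrom s l) = C.dotOf s ∨ C.dotOf (C.encodeFrom s l) ∈ l := by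
  induction l generalizing s with
  | nil => exact Or.inl rfl
  | cons a l ih =>
    change C.dotOf (C.encodeFrom (C.extend s a) l) = C.dotOf s ∨
      C.dotOf (C.encodeFrom (C.extend s a) l) ∈ a :: l
    rcases ih (C.extend s a) with h | h
    · rcases C.dotOf_extend s a with h' | h'
      · exact Or.inr (by rw [h.trans h']; exact List.mem_cons_self)
      · exact Or.inl (h.trans h')
    · exact Or.inr (List.mem_cons_of_mem a h)

lemma length_lt_encodeFrom_concat (s : List ℕ) {l w : List V} {d : V} (hlw : l <+: w)
    (hd : C.Admissible (C.dotOf (C.encodeFrom s l)) (C.encodeFrom s l).length d) :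
    (C.encodeFrom s l).length < (C.encodeFrom s (w ++ [d])).length := by
  have hpre := C.encodeFrom_prefix s hlw
  have hext : C.encodeFrom s (w ++ [d]) = C.extend (C.encodeFrom s w) d := by
    rw [encodeFrom_append]
    rfl
  rw [hext]
  rcases eq_or_ne (C.encodeFrom s l) (C.encodeFrom s w) with heq | hne
  · rw [← heq, extend, if_pos hd]
    simp
  · calc (C.encodeFrom s l).length
        < (C.encodeFrom s w).length :=
          lt_of_le_of_ne hpre.length_le fun h => hne (hpre.eq_of_length h)
      _ ≤ (C.extend (C.encodeFrom s w) d).length := (C.prefix_extend _ d).length_le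

/-- Encoding a trail point from `s` never stalls: eventually the last dot of the trail is
admissible below the dot coded so far, and is then appended. -/
lemma isPoint_encodeFrom {T : ℕ → P.Trail} (hT : P.trailSpace.IsPoint T) {s : List ℕ}
    (hs : ∃ i, P.refines (P.lastDot C.top (T i)) (C.dotOf s)) :
    C.spread.IsPoint fun n => C.encodeFrom s (T n).1 := by
  refine C.isPoint_spread_iff.2 ⟨fun n => C.encodeFrom_prefix s (hT.mono n), fun n => ?_⟩
  set u := C.encodeFrom s (T n).1
  have hd := IsPoint.lastDot C.refines_top hT
  obtain ⟨i, hi⟩ : ∃ i, P.refines (P.lastDot C.top (T i)) (C.dotOf u) := by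
    rcases C.dotOf_encodeFrom s (T n).1 with h | h
    · rwa [h]
    · exact ⟨n, lastDot_refines_of_mem h⟩
  obtain ⟨m, hstrict, hdec, hlong⟩ := ((hd.eventually_strict hi).and
    ((C.eventually_decides hd u.length).and
      (hT.eventually_strict (P.trailSpace.refines_refl _)))).exists
  have hpre : (T n).1 <+: (T m).1 := hlong.1
  have hTm : (T m).1 ≠ [] := fun h =>
    hlong.2 (Subtype.ext (h.trans (List.prefix_nil.mp (h ▸ hpre)).symm))
  obtain ⟨w, hw⟩ := exists_eq_concat_lastDot (M := C.top) hTm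
  have hnw : (T n).1 <+: w := by
    refine (List.prefix_concat_iff.mp (hw ▸ hpre)).resolve_left fun h => hlong.2 ?_
    exact Subtype.ext (hw.trans h.symm)
  exact ⟨m, hw ▸ C.length_lt_encodeFrom_concat s hnw ⟨hstrict, hdec⟩⟩

lemma lastDot_refines_dotOf_encodeFrom_nil (u : P.Trail) :
    P.refines (P.lastDot C.top u) (C.dotOf (C.encodeFrom [] u.1)) := by
  rcases C.dotOf_encodeFrom [] u.1 with h | h
  · rw [h, dotOf_nil]
    exact C.refines_top _
  · exact lastDot_refines_of_mem h

noncomputable def encode : RefMorphism P.trailSpace C.spread where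
  toFun u := C.encodeFrom [] u.1
  maps_points _ hT := C.isPoint_encodeFrom hT ⟨0, by rw [dotOf_nil]; exact C.refines_top _⟩
  reflects_apart T U _ _ := fun ⟨n, h⟩ => ⟨n, (trailSpace_apart_iff C.refines_top).2 <|
    apart_of_refines_left (C.lastDot_refines_dotOf_encodeFrom_nil (T n))
      (P.apart_mono _ _ _ (C.lastDot_refines_dotOf_encodeFrom_nil (U n)) h)⟩

noncomputable def track (p : P.Pt) (s : List ℕ) (hs : ∃ i, P.refines (p.1 i) (C.dotOf s)) :
    C.spread.Pt :=
  ⟨fun n => C.encodeFrom s (segList p.1 n), C.isPoint_encodeFrom (P.trailOf p).2 <| by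
    obtain ⟨i, hi⟩ := hs
    exact ⟨i + 1, by rwa [lastDot_trailOf_succ]⟩⟩

lemma begins_track (p : P.Pt) (s : List ℕ) (hs : ∃ i, P.refines (p.1 i) (C.dotOf s)) :
    C.spread.begins (C.track p s hs).1 s :=
  (C.track p s hs).2.shrink 0

lemma pEquiv_decode_track (p : P.Pt) (s : List ℕ) (hs : ∃ i, P.refines (p.1 i) (C.dotOf s)) :
    P.pEquiv (C.decode.pointMap (C.track p s hs)) p := by
  obtain ⟨i, hi⟩ := hs
  refine p.2.not_apart_of_forall_exists_refines
    (q := fun n => C.dotOf (C.encodeFrom s (segList p.1 n))) fun n => ?_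
  rcases C.dotOf_encodeFrom s (segList p.1 n) with h | h
  · exact ⟨i, by rwa [h]⟩
  · obtain ⟨j, hj⟩ := exists_eq_of_mem_segList p.1 h
    exact ⟨j, hj ▸ P.refines_refl _⟩

lemma areIsomorphic : P.AreIsomorphic C.spread := by
  have hnil : ∀ p : P.Pt, ∃ i, P.refines (p.1 i) (C.dotOf []) :=
    fun p => ⟨0, by rw [dotOf_nil]; exact C.refines_top _⟩
  exact ⟨fun p => C.encode.pointMap (P.trailOf p), C.decode.pointMap,
    Or.inr ⟨C.encode, fun p => ⟨P.trailOf p, fun _ => rfl, rfl⟩⟩,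
    Or.inl ⟨C.decode, fun _ => rfl⟩,
    fun x => C.pEquiv_decode_track x [] (hnil x),
    fun y => C.pEquiv_decode_track (C.decode.pointMap y) [] (hnil _)⟩

/-- `ā` in the spread is decoded into `ā` in `P`; a point of the latter beginning with the
dot of `s` is tracked back to a branch through `s`. -/
lemma basicOpen (hbo : P.BasicOpen) : C.spread.BasicOpen := by
  rintro s x ⟨q, hq, hxq⟩ y
  by_cases hyx : C.spread.pApart y x
  · exact Or.inl hyx
  have hy : C.decode.pointMap y ∈ P.barSet (C.dotOf s) :=
    ⟨C.decode.pointMap q, C.begins_decode hq, C.spread.pEquiv_trans hyx hxq⟩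
  have hopen : P.NatOpen (P.barSet (C.dotOf s)) := hbo _
  obtain ⟨m, hm⟩ := (hopen _ hy (C.decode.pointMap y)).resolve_left (P.pEquiv_refl _)
  refine Or.inr ⟨m, fun z hz => ?_⟩
  obtain ⟨p, ⟨j, hj⟩, hzp⟩ := @hm (C.decode.pointMap z) (C.begins_decode hz)
  exact ⟨C.track p s ⟨j, hj.1⟩, C.begins_track p s _,
    P.pEquiv_trans hzp (P.pEquiv_symm (C.pEquiv_decode_track p s _))⟩

end BaireCoding

end PreNaturalSpace

/-- classical: a basic-open natural space is isomorphic to a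
basic-open spread whose underlying tree is the tree `(ℕ*,⊑)` of Baire space. -/
theorem stmt12 {V : Type} (P : PreNaturalSpace V) (hP : P.IsNaturalSpace)
    (hbo : P.BasicOpen) :
    ∃ Q : PreNaturalSpace (List ℕ), Q.refines = BairePre.refines ∧
      Q.IsSpread ∧ Q.IsNaturalSpace ∧ Q.BasicOpen ∧ P.AreIsomorphic Q := by
  obtain ⟨C⟩ := PreNaturalSpace.BaireCoding.nonempty hP
  exact ⟨C.spread, C.spread_refines, C.isSpread, C.isNaturalSpace, C.basicOpen hbo,
    C.areIsomorphic⟩
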